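/- Let n ≥ 3. Define Ω^> = {x ∈ ℝ^{n+1} : x_1 > 0 and x_{n+1} > x_1 x_2 + x_1 Σ_{j=3}^n x_j²} and Ω^< = {x ∈ ℝ^{n+1} : x_1 > 0 and x_{n+1} < x_1 x_2 + x_1 Σ_{j=3}^n x_j²}. For q > 0, r ≠ 0, t ∈ ℝ, s = (s_3,…,s_n) ∈ ℝ^{n−2}, define the affine map T_{q,r,t,s}(x) = (q x_1, r²(x_2 − 2Σ_{j=3}^n s_j x_j + t), r(x_3 + s_3), …, r(x_n + s_n), q r²(x_{n+1} + x_1 Σ_{j=3}^n s_j² + t x_1)). Then every T_{q,r,t,s} maps Ω^> bijectively onto Ω^> and maps Ω^< bijectively onto Ω^<. -/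

import Mathlib

/-- The domain `Ω^> = {x ∈ ℝ^{n+1} : x₁ > 0, x_{n+1} > x₁x₂ + x₁ Σ_{j=3}^n x_j²}`
(coordinates are 0-indexed: `x₁ = x 0`, `x₂ = x 1`, `x_j = x (j-1)`, `x_{n+1} = x n`). -/
def omegaGT (n : ℕ) (hn : 3 ≤ n) : Set (Fin (n + 1) → ℝ) :=
  {x | 0 < x 0 ∧ x 0 * x ⟨1, by omega⟩ +
    x 0 * ∑ j : Fin (n + 1), (if 2 ≤ (j : ℕ) ∧ (j : ℕ) < n then x j ^ 2 else 0)
      < x (Fin.last n)}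

/-- The domain `Ω^< = {x ∈ ℝ^{n+1} : x₁ > 0, x_{n+1} < x₁x₂ + x₁ Σ_{j=3}^n x_j²}`. -/
def omegaLT (n : ℕ) (hn : 3 ≤ n) : Set (Fin (n + 1) → ℝ) :=
  {x | 0 < x 0 ∧ x (Fin.last n) < x 0 * x ⟨1, by omega⟩ +
    x 0 * ∑ j : Fin (n + 1), (if 2 ≤ (j : ℕ) ∧ (j : ℕ) < n then x j ^ 2 else 0)}

/-- The affine map `T_{q,r,t,s}` : `x₁ ↦ q x₁`, `x₂ ↦ r²(x₂ − 2Σ s_j x_j + t)`,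
`x_j ↦ r(x_j + s_j)` (for `3 ≤ j ≤ n`), `x_{n+1} ↦ q r²(x_{n+1} + x₁ Σ s_j² + t x₁)`. -/
def Tmap (n : ℕ) (q r t : ℝ) (s : Fin (n - 2) → ℝ) (x : Fin (n + 1) → ℝ) :
    Fin (n + 1) → ℝ := fun i =>
  if h0 : (i : ℕ) = 0 then q * x i
  else if h1 : (i : ℕ) = 1 then
    r ^ 2 * (x i - 2 * (∑ j : Fin (n - 2), s j * x ⟨(j : ℕ) + 2, by have := j.isLt; omega⟩) + t)
  else if h2 : (i : ℕ) = n then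
    q * r ^ 2 * (x i + x 0 * (∑ j : Fin (n - 2), s j ^ 2) + t * x 0)
  else r * (x i + s ⟨(i : ℕ) - 2, by have := i.isLt; omega⟩)

/-!
Each `T_{q,r,t,s}` multiplies `x₁` by `q > 0` and the height `x_{n+1} - x₁x₂ - x₁ Σ x_j²` above
`Γ` by `q r² > 0`, so it maps both `Ω^>` and `Ω^<` into themselves. The maps compose like a group,
and the inverse of `T_{q,r,t,s}` is `T_{q⁻¹, r⁻¹, -r²(t + 2|s|²), -r s}`, which is again of this
form and hence also maps each domain into itself; this gives bijectivity.
-/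

/-- `midCoord n j` is the paper's coordinate `x_{j+3}`, the one translated by `s_{j+3}`. -/
def midCoord (n : ℕ) : Fin (n - 2) ↪ Fin (n + 1) where
  toFun j := ⟨j + 2, by omega⟩
  inj' i j h := Fin.ext (by simpa using h)

@[simp]
theorem midCoord_val {n : ℕ} (j : Fin (n - 2)) : (midCoord n j : ℕ) = j + 2 := rfl

theorem eq_zero_or_one_or_last_or_midCoord {n : ℕ} (hn : 3 ≤ n) (i : Fin (n + 1)) :
    i = 0 ∨ i = ⟨1, by omega⟩ ∨ i = Fin.last n ∨ ∃ j, i = midCoord n j := by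
  rcases i with ⟨i, hi⟩
  simp only [Fin.ext_iff, Fin.val_zero, Fin.val_last, midCoord_val]
  by_cases h : i < 2 ∨ i = n
  · omega
  · exact .inr <| .inr <| .inr ⟨⟨i - 2, by omega⟩, by simp only; omega⟩

theorem sum_middle_eq_sum_midCoord {n : ℕ} (f : Fin (n + 1) → ℝ) :
    ∑ j : Fin (n + 1), (if 2 ≤ (j : ℕ) ∧ (j : ℕ) < n then f j else 0)
      = ∑ j : Fin (n - 2), f (midCoord n j) := by
  rw [← Finset.sum_filter, ← Finset.sum_map]
  congr 1
  ext ⟨i, hi⟩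
  simp only [Finset.mem_filter, Finset.mem_univ, true_and, Finset.mem_map, Fin.ext_iff,
    midCoord_val]
  exact ⟨fun h => ⟨⟨i - 2, by omega⟩, by simp only; omega⟩, by rintro ⟨j, rfl⟩; omega⟩

section Tmap

variable {n : ℕ} {q r t : ℝ} {s : Fin (n - 2) → ℝ} {x : Fin (n + 1) → ℝ}

@[simp]
theorem Tmap_zero : Tmap n q r t s x 0 = q * x 0 := by simp [Tmap]

@[simp]
theorem Tmap_one (hn : 3 ≤ n) : Tmap n q r t s x ⟨1, by omega⟩
    = r ^ 2 * (x ⟨1, by omega⟩ - 2 * ∑ j, s j * x (midCoord n j) + t) := by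
  simp only [Tmap]
  rw [dif_neg one_ne_zero, dif_pos trivial]
  rfl

@[simp]
theorem Tmap_last (hn : 3 ≤ n) : Tmap n q r t s x (Fin.last n)
    = q * r ^ 2 * (x (Fin.last n) + x 0 * ∑ j, s j ^ 2 + t * x 0) := by
  simp only [Tmap, Fin.val_last]
  rw [dif_neg (by omega), dif_neg (by omega), dif_pos trivial]

@[simp]
theorem Tmap_midCoord (j : Fin (n - 2)) :
    Tmap n q r t s x (midCoord n j) = r * (x (midCoord n j) + s j) := by
  have := j.isLt
  unfold Tmap
  rw [dif_neg (by simp), dif_neg (by simp), dif_neg (by simp; omega)]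
  simp

end Tmap

theorem funext_midCoord {n : ℕ} (hn : 3 ≤ n) {x y : Fin (n + 1) → ℝ} (h0 : x 0 = y 0)
    (h1 : x ⟨1, by omega⟩ = y ⟨1, by omega⟩) (hlast : x (Fin.last n) = y (Fin.last n))
    (hmid : ∀ j, x (midCoord n j) = y (midCoord n j)) : x = y := by
  funext i
  rcases eq_zero_or_one_or_last_or_midCoord hn i with rfl | rfl | rfl | ⟨j, rfl⟩
  exacts [h0, h1, hlast, hmid j]

theorem Tmap_one_one_zero_zero {n : ℕ} (hn : 3 ≤ n) : Tmap n 1 1 0 0 = id := by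
  funext x
  apply funext_midCoord hn <;> simp [Tmap_one hn, Tmap_last hn]

theorem Tmap_comp_Tmap {n : ℕ} (hn : 3 ≤ n) {r : ℝ} (hr : r ≠ 0) (q t q' r' t' : ℝ)
    (s s' : Fin (n - 2) → ℝ) :
    Tmap n q' r' t' s' ∘ Tmap n q r t s
      = Tmap n (q * q') (r * r') (t + t' / r ^ 2 - 2 * (∑ j, s j * s' j) / r)
          (fun j => s j + s' j / r) := by
  funext x
  apply funext_midCoord hn
  · simp only [Function.comp_apply, Tmap_zero]; ring
  · have hsum : ∑ j, s' j * (r * (x (midCoord n j) + s j))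
        = r * (∑ j, s' j * x (midCoord n j) + ∑ j, s j * s' j) := by
      simp only [Finset.mul_sum, ← Finset.sum_add_distrib]
      exact Finset.sum_congr rfl fun j _ => by ring
    have hsum' : ∑ j, (s j + s' j / r) * x (midCoord n j)
        = ∑ j, s j * x (midCoord n j) + (∑ j, s' j * x (midCoord n j)) / r := by
      simp only [Finset.sum_div, ← Finset.sum_add_distrib]
      exact Finset.sum_congr rfl fun j _ => by ring
    simp only [Function.comp_apply, Tmap_one hn, Tmap_midCoord, hsum, hsum']
    field_simp
    ring
  · have hsum : ∑ j, (s j + s' j / r) ^ 2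
        = ∑ j, s j ^ 2 + 2 * (∑ j, s j * s' j) / r + (∑ j, s' j ^ 2) / r ^ 2 := by
      simp only [Finset.mul_sum, Finset.sum_div, ← Finset.sum_add_distrib]
      exact Finset.sum_congr rfl fun j _ => by field_simp; ring
    simp only [Function.comp_apply, Tmap_last hn, Tmap_zero, hsum]
    field_simp
    ring
  · intro j
    simp only [Function.comp_apply, Tmap_midCoord]
    field_simp
    ring

section Inverse

variable {n : ℕ} (hn : 3 ≤ n) {q r : ℝ} (t : ℝ) (s : Fin (n - 2) → ℝ)
include hn

theorem Tmap_leftInverse (hq : q ≠ 0) (hr : r ≠ 0) :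
    Function.LeftInverse (Tmap n q⁻¹ r⁻¹ (-r ^ 2 * (t + 2 * ∑ j, s j ^ 2)) (-r • s))
      (Tmap n q r t s) := by
  rw [Function.leftInverse_iff_comp, Tmap_comp_Tmap hn hr, ← Tmap_one_one_zero_zero hn]
  congr 1
  · field_simp
  · field_simp
  · simp only [Pi.smul_apply, smul_eq_mul, mul_left_comm (s _) (-r), ← Finset.mul_sum, ← sq]
    field_simp
    ring
  · funext j
    simp only [Pi.smul_apply, smul_eq_mul, Pi.zero_apply]
    field_simp
    ring

theorem Tmap_rightInverse (hq : q ≠ 0) (hr : r ≠ 0) :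
    Function.RightInverse (Tmap n q⁻¹ r⁻¹ (-r ^ 2 * (t + 2 * ∑ j, s j ^ 2)) (-r • s))
      (Tmap n q r t s) := by
  rw [Function.rightInverse_iff_comp, Tmap_comp_Tmap hn (inv_ne_zero hr),
    ← Tmap_one_one_zero_zero hn]
  congr 1
  · field_simp
  · field_simp
  · simp only [Pi.smul_apply, smul_eq_mul, mul_assoc, ← Finset.mul_sum, ← sq]
    field_simp
    ring
  · funext j
    simp only [Pi.smul_apply, smul_eq_mul, Pi.zero_apply]
    field_simp
    ring

end Inverse

theorem Tmap_bijOn_of_forall_mapsTo {n : ℕ} (hn : 3 ≤ n) {q r : ℝ} (t : ℝ)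
    (s : Fin (n - 2) → ℝ) (hq : 0 < q) (hr : r ≠ 0) {Ω : Set (Fin (n + 1) → ℝ)}
    (hΩ : ∀ q r t s, 0 < q → r ≠ 0 → Set.MapsTo (Tmap n q r t s) Ω Ω) :
    Set.BijOn (Tmap n q r t s) Ω Ω :=
  Set.InvOn.bijOn
    ⟨(Tmap_leftInverse hn t s hq.ne' hr).leftInvOn Ω,
      (Tmap_rightInverse hn t s hq.ne' hr).leftInvOn Ω⟩
    (hΩ q r t s hq hr) (hΩ _ _ _ _ (inv_pos.mpr hq) (inv_ne_zero hr))

def heightAboveGamma (n : ℕ) (hn : 3 ≤ n) (x : Fin (n + 1) → ℝ) : ℝ :=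
  x (Fin.last n) - (x 0 * x ⟨1, by omega⟩ +
    x 0 * ∑ j : Fin (n + 1), (if 2 ≤ (j : ℕ) ∧ (j : ℕ) < n then x j ^ 2 else 0))

section Height

variable {n : ℕ} (hn : 3 ≤ n) {q r t : ℝ} {s : Fin (n - 2) → ℝ} {x : Fin (n + 1) → ℝ}
include hn

theorem mem_omegaGT_iff : x ∈ omegaGT n hn ↔ 0 < x 0 ∧ 0 < heightAboveGamma n hn x :=
  and_congr_right' sub_pos.symm

theorem mem_omegaLT_iff : x ∈ omegaLT n hn ↔ 0 < x 0 ∧ heightAboveGamma n hn x < 0 :=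
  and_congr_right' sub_neg.symm

theorem heightAboveGamma_Tmap :
    heightAboveGamma n hn (Tmap n q r t s x) = q * r ^ 2 * heightAboveGamma n hn x := by
  have hsq : ∑ j, (r * (x (midCoord n j) + s j)) ^ 2 = r ^ 2 * (∑ j, x (midCoord n j) ^ 2
      + 2 * ∑ j, s j * x (midCoord n j) + ∑ j, s j ^ 2) := by
    simp only [Finset.mul_sum, ← Finset.sum_add_distrib]
    exact Finset.sum_congr rfl fun j _ => by ring
  simp only [heightAboveGamma, sum_middle_eq_sum_midCoord, Tmap_zero, Tmap_one hn, Tmap_last hn,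
    Tmap_midCoord, hsq]
  ring

theorem Tmap_mapsTo_omegaGT (hq : 0 < q) (hr : r ≠ 0) :
    Set.MapsTo (Tmap n q r t s) (omegaGT n hn) (omegaGT n hn) := by
  intro x hx
  rw [mem_omegaGT_iff] at hx ⊢
  rw [Tmap_zero, heightAboveGamma_Tmap]
  exact ⟨mul_pos hq hx.1, mul_pos (by positivity) hx.2⟩

theorem Tmap_mapsTo_omegaLT (hq : 0 < q) (hr : r ≠ 0) :
    Set.MapsTo (Tmap n q r t s) (omegaLT n hn) (omegaLT n hn) := by
  intro x hx
  rw [mem_omegaLT_iff] at hx ⊢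
  rw [Tmap_zero, heightAboveGamma_Tmap]
  exact ⟨mul_pos hq hx.1, mul_neg_of_pos_of_neg (by positivity) hx.2⟩

end Height

/-- Every `T_{q,r,t,s}` with `q > 0`, `r ≠ 0` maps `Ω^>` bijectively onto `Ω^>` and
maps `Ω^<` bijectively onto `Ω^<`. -/
theorem Tmap_bijOn_omega (n : ℕ) (hn : 3 ≤ n) (q r t : ℝ) (s : Fin (n - 2) → ℝ)
    (hq : 0 < q) (hr : r ≠ 0) :
    Set.BijOn (Tmap n q r t s) (omegaGT n hn) (omegaGT n hn) ∧
    Set.BijOn (Tmap n q r t s) (omegaLT n hn) (omegaLT n hn) :=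
  ⟨Tmap_bijOn_of_forall_mapsTo hn t s hq hr fun _ _ _ _ => Tmap_mapsTo_omegaGT hn,
    Tmap_bijOn_of_forall_mapsTo hn t s hq hr fun _ _ _ _ => Tmap_mapsTo_omegaLT hn⟩
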